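/- Unipotent parameterization of the crown domain (Ξ = G·exp(iΛ)·x₀): the set of pairs (g·(i + ix), g·(−i + ix)) ∈ ℂ×ℂ, where g ranges over SL(2,ℝ) acting by Möbius transformations and x ranges over the open interval (−1, 1), is exactly the crown domain Ξ = {(z,w) ∈ ℂ×ℂ : Im z > 0 and Im w < 0}. -/

import Mathlib

/-- The Möbius action of `SL(2,ℝ)` on (nonreal) complex numbers. -/
noncomputable def moebSL2R (g : Matrix.SpecialLinearGroup (Fin 2) ℝ) (z : ℂ) : ℂ :=
  (((g : Matrix (Fin 2) (Fin 2) ℝ) 0 0 : ℂ) * z + ((g : Matrix (Fin 2) (Fin 2) ℝ) 0 1 : ℂ)) /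
    (((g : Matrix (Fin 2) (Fin 2) ℝ) 1 0 : ℂ) * z + ((g : Matrix (Fin 2) (Fin 2) ℝ) 1 1 : ℂ))

/-!
Möbius transformations preserve both half-planes, which gives one inclusion. Conversely, given
`Im z > 0 > Im w`, the points `z` and `w` lie on a common geodesic: a vertical line, or a circle
centred on `ℝ` with real endpoints `q < p`. A translation, resp. `u ↦ (u - p) / (u - q)`, moves
this geodesic onto `iℝ`, sending `z` to `i a` and `w` to `i b` with `a > 0 > b`; the dilation by
`2 / (a - b)` then puts the pair at `(i + i x, -i + i x)` with `x = (a + b) / (a - b) ∈ (-1, 1)`.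
-/

open Complex ComplexConjugate
open scoped MatrixGroups UpperHalfPlane

lemma moebSL2R_conj (g : SL(2, ℝ)) (z : ℂ) : moebSL2R g (conj z) = conj (moebSL2R g z) := by
  simp [moebSL2R, map_div₀]

lemma moebSL2R_coe_eq_coe_smul (g : SL(2, ℝ)) (τ : ℍ) : moebSL2R g τ = ↑(g • τ) := by
  rw [UpperHalfPlane.coe_specialLinearGroup_apply]
  rfl

lemma im_moebSL2R_pos (g : SL(2, ℝ)) {z : ℂ} (hz : 0 < z.im) : 0 < (moebSL2R g z).im := by
  rw [moebSL2R_coe_eq_coe_smul g ⟨z, hz⟩]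
  exact (g • (⟨z, hz⟩ : ℍ)).coe_im_pos

lemma im_moebSL2R_neg (g : SL(2, ℝ)) {z : ℂ} (hz : z.im < 0) : (moebSL2R g z).im < 0 := by
  have := im_moebSL2R_pos g (z := conj z) (by simpa using hz)
  rwa [moebSL2R_conj, conj_im, neg_pos] at this

lemma moebSL2R_mul_of_im_pos (g h : SL(2, ℝ)) {z : ℂ} (hz : 0 < z.im) :
    moebSL2R (g * h) z = moebSL2R g (moebSL2R h z) := by
  simp only [moebSL2R_coe_eq_coe_smul _ ⟨z, hz⟩, mul_smul, moebSL2R_coe_eq_coe_smul g (h • _)]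

lemma moebSL2R_mul (g h : SL(2, ℝ)) {z : ℂ} (hz : z.im ≠ 0) :
    moebSL2R (g * h) z = moebSL2R g (moebSL2R h z) := by
  rcases hz.lt_or_gt with hz | hz
  · have hz' : 0 < (conj z).im := by simpa using hz
    apply (starRingEnd ℂ).injective
    rw [← moebSL2R_conj, moebSL2R_mul_of_im_pos g h hz', moebSL2R_conj, moebSL2R_conj]
  · exact moebSL2R_mul_of_im_pos g h hz

lemma moebSL2R_one (z : ℂ) : moebSL2R 1 z = z := by
  simp [moebSL2R]

lemma moebSL2R_inv_moebSL2R (g : SL(2, ℝ)) {z : ℂ} (hz : z.im ≠ 0) :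
    moebSL2R g⁻¹ (moebSL2R g z) = z := by
  rw [← moebSL2R_mul _ _ hz, inv_mul_cancel, moebSL2R_one]

noncomputable def affineSL2R (s : ℝ) (hs : 0 < s) (b : ℝ) : SL(2, ℝ) :=
  ⟨!![√s, b / √s; 0, 1 / √s], by
    have : √s ≠ 0 := (Real.sqrt_pos.2 hs).ne'
    simp [Matrix.det_fin_two_of, this]⟩

lemma moebSL2R_affineSL2R (s : ℝ) (hs : 0 < s) (b : ℝ) (u : ℂ) :
    moebSL2R (affineSL2R s hs b) u = s * u + b := by
  have h : (√s : ℂ) ≠ 0 := by exact_mod_cast (Real.sqrt_pos.2 hs).ne'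
  have hsq : (√s : ℂ) * √s = s := by exact_mod_cast Real.mul_self_sqrt hs.le
  simp only [moebSL2R, affineSL2R, Matrix.of_apply, Matrix.cons_val', Matrix.cons_val_zero,
    Matrix.cons_val_one, Matrix.cons_val_fin_one, ofReal_div, ofReal_one, ofReal_zero, zero_mul,
    zero_add]
  field_simp
  linear_combination u * hsq

noncomputable def cayleySL2R (q p : ℝ) (hqp : q < p) : SL(2, ℝ) :=
  ⟨!![1 / √(p - q), -p / √(p - q); 1 / √(p - q), -q / √(p - q)], by
    have : 0 < p - q := sub_pos.2 hqp
    rw [Matrix.det_fin_two_of]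
    field_simp
    rw [Real.sq_sqrt this.le]
    ring⟩

lemma moebSL2R_cayleySL2R (q p : ℝ) (hqp : q < p) (u : ℂ) :
    moebSL2R (cayleySL2R q p hqp) u = (u - p) / (u - q) := by
  have h : (√(p - q) : ℂ) ≠ 0 := by exact_mod_cast (Real.sqrt_pos.2 (sub_pos.2 hqp)).ne'
  simp only [moebSL2R, cayleySL2R, Matrix.of_apply, Matrix.cons_val', Matrix.cons_val_zero,
    Matrix.cons_val_one, Matrix.cons_val_fin_one, ofReal_div, ofReal_one, ofReal_neg]
  rw [← mul_div_mul_left _ _ h]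
  congr 1 <;> field_simp <;> ring

-- `(u - p) * conj (u - q)` has real part zero iff `u - p ⟂ u - q`, i.e. (Thales) `u` lies on the
-- circle with diameter `[q, p]`, the geodesic with endpoints `q` and `p`.
lemma div_sub_eq_I_mul_of_re_eq_zero {u : ℂ} {q p : ℝ} (hu : ((u - p) * conj (u - q)).re = 0) :
    (u - p) / (u - q) = I * ((p - q) * u.im / normSq (u - q) : ℝ) := by
  simp only [mul_re, conj_re, conj_im, sub_re, sub_im, ofReal_re, ofReal_im] at hu
  apply Complex.ext
  · simp only [div_re, sub_re, sub_im, ofReal_re, ofReal_im, mul_re, I_re, I_im]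
    rw [← add_div]
    linear_combination hu / normSq (u - q)
  · simp only [div_im, sub_re, sub_im, ofReal_re, ofReal_im, mul_im, I_re, I_im]
    rw [div_sub_div_same]
    ring

lemma exists_re_mul_conj_eq_zero {z w : ℂ} (hz : z.im ≠ 0) (hre : z.re ≠ w.re) :
    ∃ q p : ℝ, q < p ∧ ((z - p) * conj (z - q)).re = 0 ∧ ((w - p) * conj (w - q)).re = 0 := by
  obtain ⟨c, hc⟩ : ∃ c : ℝ, c * (2 * (z.re - w.re)) = normSq z - normSq w :=
    ⟨_, div_mul_cancel₀ _ (mul_ne_zero two_ne_zero (sub_ne_zero.2 hre))⟩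
  have hpos : 0 < normSq (z - c) := normSq_pos.2 fun h ↦ hz (by simpa using congrArg im h)
  obtain ⟨r, hr0, hr⟩ : ∃ r : ℝ, 0 < r ∧ r ^ 2 = (z.re - c) ^ 2 + z.im ^ 2 := by
    refine ⟨√(normSq (z - c)), Real.sqrt_pos.2 hpos, ?_⟩
    rw [Real.sq_sqrt hpos.le, normSq_apply]
    simp only [sub_re, sub_im, ofReal_re, ofReal_im]
    ring
  refine ⟨c - r, c + r, by linarith, ?_, ?_⟩ <;>
    simp only [mul_re, conj_re, conj_im, sub_re, sub_im, ofReal_re, ofReal_im]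
  · linear_combination -hr
  · simp only [normSq_apply] at hc
    linear_combination hc - hr

lemma exists_moebSL2R_eq_I_mul {z w : ℂ} (hz : 0 < z.im) (hw : w.im < 0) :
    ∃ (h : SL(2, ℝ)) (a b : ℝ), 0 < a ∧ b < 0 ∧
      moebSL2R h z = I * a ∧ moebSL2R h w = I * b := by
  by_cases hre : z.re = w.re
  · refine ⟨affineSL2R 1 one_pos (-z.re), z.im, w.im, hz, hw, ?_, ?_⟩ <;>
      apply Complex.ext <;> simp [moebSL2R_affineSL2R, hre]
  · obtain ⟨q, p, hqp, hzc, hwc⟩ := exists_re_mul_conj_eq_zero hz.ne' hre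
    have hN {u : ℂ} (hu : u.im ≠ 0) : 0 < normSq (u - q) :=
      normSq_pos.2 fun h ↦ hu (by simpa using congrArg im h)
    refine ⟨cayleySL2R q p hqp, _, _, ?_, ?_, by rw [moebSL2R_cayleySL2R,
      div_sub_eq_I_mul_of_re_eq_zero hzc], by rw [moebSL2R_cayleySL2R,
      div_sub_eq_I_mul_of_re_eq_zero hwc]⟩
    · exact div_pos (mul_pos (sub_pos.2 hqp) hz) (hN hz.ne')
    · exact div_neg_of_neg_of_pos (mul_neg_of_pos_of_neg (sub_pos.2 hqp) hw) (hN hw.ne)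

lemma exists_moebSL2R_eq_crown_slice {z w : ℂ} (hz : 0 < z.im) (hw : w.im < 0) :
    ∃ (k : SL(2, ℝ)) (x : ℝ), x ∈ Set.Ioo (-1 : ℝ) 1 ∧
      moebSL2R k z = I + I * x ∧ moebSL2R k w = -I + I * x := by
  obtain ⟨h, a, b, ha, hb, hza, hwb⟩ := exists_moebSL2R_eq_I_mul hz hw
  have hab : 0 < a - b := by linarith
  have hab' : (a : ℂ) - b ≠ 0 := by exact_mod_cast hab.ne'
  refine ⟨affineSL2R (2 / (a - b)) (by positivity) 0 * h, (a + b) / (a - b), ?_, ?_, ?_⟩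
  · rw [Set.mem_Ioo, lt_div_iff₀ hab, div_lt_iff₀ hab]
    constructor <;> linarith
  · rw [moebSL2R_mul _ _ hz.ne', hza, moebSL2R_affineSL2R]
    push_cast
    field_simp
    ring
  · rw [moebSL2R_mul _ _ hw.ne, hwb, moebSL2R_affineSL2R]
    push_cast
    field_simp
    ring

/-- Unipotent parameterization of the crown domain: `Ξ = G exp(iΛ)·x₀`. -/
theorem crown_unipotent_parameterization :
    {p : ℂ × ℂ | ∃ g : Matrix.SpecialLinearGroup (Fin 2) ℝ, ∃ x : ℝ,
        x ∈ Set.Ioo (-1 : ℝ) 1 ∧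
        p = (moebSL2R g (Complex.I + Complex.I * x),
             moebSL2R g (-Complex.I + Complex.I * x))} =
      {p : ℂ × ℂ | 0 < p.1.im ∧ p.2.im < 0} := by
  ext ⟨z, w⟩
  simp only [Set.mem_ofPred_eq, Prod.mk.injEq]
  constructor
  · rintro ⟨g, x, ⟨hx₁, hx₂⟩, rfl, rfl⟩
    constructor <;> [apply im_moebSL2R_pos; apply im_moebSL2R_neg] <;>
      simp only [add_im, neg_im, mul_im, I_re, I_im, ofReal_re, ofReal_im] <;> linarith
  · rintro ⟨hz, hw⟩
    obtain ⟨k, x, hx, hkz, hkw⟩ := exists_moebSL2R_eq_crown_slice hz hw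
    refine ⟨k⁻¹, x, hx, ?_, ?_⟩
    · rw [← hkz, moebSL2R_inv_moebSL2R k hz.ne']
    · rw [← hkw, moebSL2R_inv_moebSL2R k hw.ne]
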